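/- Let m : ℕ and consider ℚ-linear maps f : ℚ² → Forms_m that are SL₂(ℤ)-equivariant, where SL₂(ℤ) acts on ℚ² by the standard matrix-vector action and on Forms_m by the substitution action. If m ≠ 1, every such equivariant map is zero; if m = 1, the space of such equivariant maps is one-dimensional, spanned by (u,v) ↦ u·y − v·x. (This encodes that V ⊗ Sym^m V has a nonzero SL₂(ℤ)-invariant vector if and only if m = 1, used in the proof of Proposition 3.4.) -/

import Mathlib

/-!
Evaluating the forms gives a pairing `F(v, w) = f(v)(w)`, linear in `v` and homogeneous of
degree `m` in `w`; equivariance of `f` says exactly that `F(γ v, γ w) = F(v, w)`.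
The shears `T ^ n` fix `e₀`, so `F(e₀, ·)` is a shear-invariant form, hence `c y ^ m`: its
restriction to the line `y = 1` is a polynomial taking the same value at all integers.
As `S e₀ = e₁`, `F(e₁, w) = c (-x) ^ m`, and `T e₁ = e₀ + e₁` compared at the point `(-1, 1)` gives
`2 c = 2 ^ m c`. So `c = 0` unless `m = 1`, and for `m = 1`, `F(v, w) = c (v₀ w₁ - v₁ w₀)`.
-/

/-- The entries of an element of `SL₂(ℤ)`, mapped into `ℚ`. -/
noncomputable def matQ (γ : Matrix.SpecialLinearGroup (Fin 2) ℤ) :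
    Matrix (Fin 2) (Fin 2) ℚ :=
  (γ : Matrix (Fin 2) (Fin 2) ℤ).map (Int.cast : ℤ → ℚ)

/-- `p ∘ g` : the polynomial obtained from `p ∈ ℚ[x,y]` by the substitution
`x ↦ g₀₀·x + g₀₁·y`, `y ↦ g₁₀·x + g₁₁·y`. -/
noncomputable def polyComp (p : MvPolynomial (Fin 2) ℚ) (g : Matrix (Fin 2) (Fin 2) ℚ) :
    MvPolynomial (Fin 2) ℚ :=
  MvPolynomial.aeval
    (fun i => MvPolynomial.C (g i 0) * MvPolynomial.X 0
      + MvPolynomial.C (g i 1) * MvPolynomial.X 1) p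

/-- `Forms_d`: the space of homogeneous polynomials of degree `d` in `ℚ[x,y]`,
realizing `Sym^d` of the standard representation of `SL₂(ℤ)`. -/
noncomputable abbrev Forms (d : ℕ) : Submodule ℚ (MvPolynomial (Fin 2) ℚ) :=
  MvPolynomial.homogeneousSubmodule (Fin 2) ℚ d

/-- The spanning map `(u,v) ↦ u·y − v·x`, as a polynomial in `ℚ[x,y]`. -/
noncomputable def spanPoly (v : Fin 2 → ℚ) : MvPolynomial (Fin 2) ℚ :=
  MvPolynomial.C (v 0) * MvPolynomial.X 1 - MvPolynomial.C (v 1) * MvPolynomial.X 0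

open Matrix MvPolynomial

theorem MvPolynomial.IsHomogeneous.eval_smul {σ R : Type*} [CommSemiring R]
    {p : MvPolynomial σ R} {m : ℕ} (hp : p.IsHomogeneous m) (t : R) (w : σ → R) :
    eval (t • w) p = t ^ m * eval w p := by
  rw [eval_eq, eval_eq, Finset.mul_sum]
  refine Finset.sum_congr rfl fun d hd => ?_
  have hdeg : ∑ i ∈ d.support, d i = m := by
    simpa [Finsupp.weight_apply, Finsupp.sum] using hp (mem_support_iff.mp hd)
  simp only [Pi.smul_apply, smul_eq_mul, mul_pow, Finset.prod_mul_distrib,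
    Finset.prod_pow_eq_pow_sum, hdeg]
  ring

theorem MvPolynomial.exists_polynomial_eval_eq_eval_add_smul {σ R : Type*} [CommSemiring R]
    (p : MvPolynomial σ R) (a d : σ → R) :
    ∃ P : Polynomial R, ∀ t : R, P.eval t = eval (a + t • d) p := by
  refine ⟨aeval (fun i => Polynomial.C (a i) + Polynomial.C (d i) * Polynomial.X) p, fun t => ?_⟩
  rw [← Polynomial.coe_aeval_eq_eval, ← AlgHom.comp_apply, comp_aeval]
  simp only [map_add, map_mul, Polynomial.aeval_C, Polynomial.aeval_X,
    Algebra.algebraMap_self, RingHom.id_apply, aeval_eq_eval]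
  congr 2
  funext i
  simp [mul_comm]

theorem Polynomial.eval_eq_eval_zero_of_forall_natCast {K : Type*} [Field K] [CharZero K]
    (P : Polynomial K) (h : ∀ n : ℕ, P.eval (n : K) = P.eval 0) (t : K) :
    P.eval t = P.eval 0 := by
  have hP : P = Polynomial.C (P.eval 0) := P.eq_of_infinite_eval_eq _ <|
    (Set.infinite_range_of_injective Nat.cast_injective).mono <| by
      rintro _ ⟨n, rfl⟩
      simpa using h n
  rw [hP, Polynomial.eval_C, Polynomial.eval_C]

theorem MvPolynomial.eq_C_mul_X_pow_of_shear_invariant {K : Type*} [Field K] [CharZero K]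
    {m : ℕ} {p : MvPolynomial (Fin 2) K} (hp : p.IsHomogeneous m)
    (hshear : ∀ (n : ℤ) (w : Fin 2 → K), eval (!![1, (n : K); 0, 1] *ᵥ w) p = eval w p) :
    p = C (eval ![0, 1] p) * X 1 ^ m := by
  have shear_mulVec (t : K) (w : Fin 2 → K) : !![1, t; 0, 1] *ᵥ w = w + t • ![w 1, 0] := by
    ext i; fin_cases i <;> simp [mulVec, dotProduct, Fin.sum_univ_two, mul_comm]
  have eval_shear (t : K) (w : Fin 2 → K) : eval (w + t • ![w 1, 0]) p = eval w p := by
    obtain ⟨P, hP⟩ := exists_polynomial_eval_eq_eval_add_smul p w ![w 1, 0]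
    have h := P.eval_eq_eval_zero_of_forall_natCast (fun n => by
      rw [hP, hP, ← shear_mulVec, zero_smul, add_zero]
      exact_mod_cast hshear n w) t
    rwa [hP, hP, zero_smul, add_zero] at h
  -- Off the line `y = 0` a shear moves `w` to `(0, w 1)`; the factor `y` takes care of that line.
  have key : X 1 * p = X 1 * (C (eval ![0, 1] p) * X 1 ^ m) := by
    refine MvPolynomial.funext fun w => ?_
    simp only [eval_mul, eval_pow, eval_C, eval_X]
    rcases eq_or_ne (w 1) 0 with hw | hw
    · simp [hw]
    · have : w + (-w 0 / w 1) • ![w 1, 0] = w 1 • ![0, 1] := by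
        ext i; fin_cases i <;> simp [hw]
      rw [← eval_shear (-w 0 / w 1), this, hp.eval_smul]
      ring
  exact mul_left_cancel₀ (X_ne_zero 1) key

theorem eval_polyComp (p : MvPolynomial (Fin 2) ℚ) (g : Matrix (Fin 2) (Fin 2) ℚ)
    (w : Fin 2 → ℚ) : eval w (polyComp p g) = eval (g *ᵥ w) p := by
  rw [polyComp, aeval_def, algebraMap_eq, ← eval_assoc]
  congr 2
  funext i
  simp [mulVec, dotProduct, Fin.sum_univ_two]

theorem det_matQ (γ : Matrix.SpecialLinearGroup (Fin 2) ℤ) : (matQ γ).det = 1 := by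
  simpa [matQ] using ((Int.castRingHom ℚ).map_det (γ : Matrix (Fin 2) (Fin 2) ℤ)).symm

theorem matQ_inv (γ : Matrix.SpecialLinearGroup (Fin 2) ℤ) :
    matQ γ⁻¹ = adjugate (matQ γ) :=
  (congrArg (Matrix.map · (Int.cast : ℤ → ℚ)) (Matrix.SpecialLinearGroup.coe_inv γ)).trans
    ((Int.castRingHom ℚ).map_adjugate _)

theorem spanPoly_mulVec (g : Matrix (Fin 2) (Fin 2) ℚ) (v : Fin 2 → ℚ) :
    spanPoly (g *ᵥ v) = polyComp (spanPoly v) (adjugate g) := by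
  refine MvPolynomial.funext fun w => ?_
  simp only [spanPoly, map_sub, map_mul, eval_C, eval_X, eval_polyComp, adjugate_fin_two,
    mulVec, dotProduct, Fin.sum_univ_two, cons_mulVec, cons_val_zero, cons_val_one,
    cons_val_fin_one, empty_mulVec]
  ring

theorem mulVec_fin_two_of {R : Type*} [CommSemiring R] (a b c d x y : R) :
    !![a, b; c, d] *ᵥ ![x, y] = ![a * x + b * y, c * x + d * y] := by
  ext i; fin_cases i <;> simp [mulVec, dotProduct]

theorem matQ_T_zpow (n : ℤ) : matQ (ModularGroup.T ^ n) = !![1, (n : ℚ); 0, 1] := by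
  ext i j; fin_cases i <;> fin_cases j <;> simp [matQ, ModularGroup.coe_T_zpow]

theorem matQ_S : matQ ModularGroup.S = !![0, -1; 1, 0] := by
  ext i j; fin_cases i <;> fin_cases j <;> simp [matQ]

def IsEquivariant {m : ℕ} (f : (Fin 2 → ℚ) →ₗ[ℚ] Forms m) : Prop :=
  ∀ γ : Matrix.SpecialLinearGroup (Fin 2) ℤ, ∀ v : Fin 2 → ℚ,
    (f (matQ γ *ᵥ v) : MvPolynomial (Fin 2) ℚ) = polyComp (f v : MvPolynomial (Fin 2) ℚ) (matQ γ⁻¹)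

noncomputable def pairing {m : ℕ} (f : (Fin 2 → ℚ) →ₗ[ℚ] Forms m) (v w : Fin 2 → ℚ) : ℚ :=
  eval w (f v : MvPolynomial (Fin 2) ℚ)

section

variable {m : ℕ} {f : (Fin 2 → ℚ) →ₗ[ℚ] Forms m}

theorem pairing_eq_add (v w : Fin 2 → ℚ) :
    pairing f v w = v 0 * pairing f ![1, 0] w + v 1 * pairing f ![0, 1] w := by
  have hv : v = v 0 • ![1, 0] + v 1 • ![0, 1] := by ext i; fin_cases i <;> simp
  conv_lhs => rw [hv]
  simp only [pairing, map_add, map_smul, Submodule.coe_add, Submodule.coe_smul,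
    smul_eval]

theorem IsEquivariant.pairing_mulVec_mulVec (hf : IsEquivariant f)
    (γ : Matrix.SpecialLinearGroup (Fin 2) ℤ) (v w : Fin 2 → ℚ) :
    pairing f (matQ γ *ᵥ v) (matQ γ *ᵥ w) = pairing f v w := by
  rw [pairing, hf, eval_polyComp, mulVec_mulVec, matQ_inv, adjugate_mul, det_matQ, one_smul,
    one_mulVec, pairing]

theorem IsEquivariant.pairing_one_zero (hf : IsEquivariant f) (w : Fin 2 → ℚ) :
    pairing f ![1, 0] w = pairing f ![1, 0] ![0, 1] * w 1 ^ m := by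
  have hshear (n : ℤ) (u : Fin 2 → ℚ) :
      eval (!![1, (n : ℚ); 0, 1] *ᵥ u) (f ![1, 0] : MvPolynomial (Fin 2) ℚ) =
        eval u (f ![1, 0] : MvPolynomial (Fin 2) ℚ) := by
    have h := hf.pairing_mulVec_mulVec (ModularGroup.T ^ n) ![1, 0] u
    simp only [matQ_T_zpow, mulVec_fin_two_of, mul_one, mul_zero, add_zero] at h
    exact h
  rw [pairing, eq_C_mul_X_pow_of_shear_invariant (f ![1, 0]).2 hshear]
  simp [pairing]

theorem IsEquivariant.pairing_zero_one (hf : IsEquivariant f) (w : Fin 2 → ℚ) :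
    pairing f ![0, 1] w = pairing f ![1, 0] ![0, 1] * (-w 0) ^ m := by
  have h := hf.pairing_mulVec_mulVec ModularGroup.S ![1, 0] ![w 1, -w 0]
  rw [matQ_S, mulVec_fin_two_of, mulVec_fin_two_of, hf.pairing_one_zero] at h
  norm_num at h
  conv_lhs => rw [show w = ![w 0, w 1] by ext i; fin_cases i <;> rfl]
  exact h

theorem IsEquivariant.pairing_one_zero_zero_one_eq_zero (hf : IsEquivariant f) (hm : m ≠ 1) :
    pairing f ![1, 0] ![0, 1] = 0 := by
  have h := hf.pairing_mulVec_mulVec (ModularGroup.T ^ (1 : ℤ)) ![0, 1] ![-2, 1]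
  rw [matQ_T_zpow, mulVec_fin_two_of, mulVec_fin_two_of] at h
  norm_num at h
  rw [pairing_eq_add, hf.pairing_one_zero, hf.pairing_zero_one, hf.pairing_zero_one] at h
  norm_num at h
  have h2 : (2 : ℚ) ^ m ≠ 2 := by
    simpa using (pow_right_injective₀ two_pos (by norm_num : (2 : ℚ) ≠ 1)).ne hm
  refine by_contra fun hc => h2 (mul_left_cancel₀ hc ?_)
  linear_combination -h

theorem IsEquivariant.coe_apply (hf : IsEquivariant f) (v : Fin 2 → ℚ) :
    (f v : MvPolynomial (Fin 2) ℚ) =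
      pairing f ![1, 0] ![0, 1] • (C (v 0) * X 1 ^ m + C (v 1) * (-X 0) ^ m) := by
  refine MvPolynomial.funext fun w => ?_
  rw [← pairing, pairing_eq_add, hf.pairing_one_zero, hf.pairing_zero_one]
  simp only [smul_eval, map_add, map_mul, map_pow, map_neg, eval_C, eval_X]
  ring

end

/-- An `SL₂(ℤ)`-equivariant `ℚ`-linear map `ℚ² → Forms_m` (standard action on `ℚ²`,
substitution action on `Forms_m`) is zero if `m ≠ 1`; if `m = 1`, the space of such maps
is one-dimensional, spanned by `(u,v) ↦ u·y − v·x` (which is itself equivariant). -/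
theorem equivariant_map_standard_to_symmetric_power
    (m : ℕ) (f : (Fin 2 → ℚ) →ₗ[ℚ] Forms m)
    (hf : ∀ γ : Matrix.SpecialLinearGroup (Fin 2) ℤ, ∀ v : Fin 2 → ℚ,
      (f ((matQ γ).mulVec v) : MvPolynomial (Fin 2) ℚ)
        = polyComp (f v : MvPolynomial (Fin 2) ℚ) (matQ γ⁻¹)) :
    (m ≠ 1 → f = 0) ∧
    (m = 1 → (∃ c : ℚ, ∀ v : Fin 2 → ℚ,
        (f v : MvPolynomial (Fin 2) ℚ) = c • spanPoly v) ∧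
      (∀ γ : Matrix.SpecialLinearGroup (Fin 2) ℤ, ∀ v : Fin 2 → ℚ,
        spanPoly ((matQ γ).mulVec v) = polyComp (spanPoly v) (matQ γ⁻¹))) := by
  have hf : IsEquivariant f := hf
  refine ⟨fun hm => ?_, fun hm => ?_⟩
  · refine LinearMap.ext fun v => Subtype.ext ?_
    rw [hf.coe_apply, hf.pairing_one_zero_zero_one_eq_zero hm, zero_smul]
    rfl
  · subst hm
    refine ⟨⟨pairing f ![1, 0] ![0, 1], fun v => ?_⟩, fun γ v => ?_⟩
    · rw [hf.coe_apply, spanPoly]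
      congr 1
      ring
    · rw [matQ_inv]
      exact spanPoly_mulVec _ v
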